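/- (Moore's theorem) In Moore's Nim with parameter k ≥ 2, a position is a P-position if and only if, writing each pile size in binary, the sum of the binary digits in each bit-position is divisible by k. Equivalently: for each bit i, the number of piles whose i-th binary digit is 1 is ≡ 0 (mod k). -/

import Mathlib

/-!
Call a position balanced when, at every bit position, the number of piles having that bit set is
divisible by `k`. A move reduces between `1` and `k - 1` piles; at the highest bit at which one of
them changes, each reduced pile either keeps its bit or drops it from `1` to `0`, and at least one
drops it, so that bit count falls by between `1` and `k - 1` and balance is lost. Conversely, from
an unbalanced position one fixes the bit counts from the top bit down. A pile already reduced at a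
higher bit may take any value on the lower bits, so at bit `j` either enough reduced piles get bit
`j` set to reach a multiple of `k`, or there are few enough reduced piles that clearing bit `j` in
further piles keeps the total number of reduced piles below `k`. So no move joins two balanced
positions and every unbalanced position has a move to a balanced one: the balanced positions are
exactly the P-positions.
-/

/-- A move in Moore's Nim with parameter `k`: choose at least one and at most
`k - 1` piles and strictly decrease each of them (removing a positive total
number of counters). `r` is the multiset of affected piles and `r'` the
multiset of their new (strictly smaller) sizes. -/
def MooreMove (k : ℕ) (s t : Multiset ℕ) : Prop :=
  ∃ r r' : Multiset ℕ, r ≤ s ∧ r ≠ 0 ∧ Multiset.card r ≤ k - 1 ∧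
    Multiset.Rel (fun a b => b < a) r r' ∧ t = s - r + r'

mutual
/-- Previous-player win in Moore's Nim: every move leads to a next-player win. -/
inductive MooreP (k : ℕ) : Multiset ℕ → Prop
  | mk (s : Multiset ℕ) : (∀ t, MooreMove k s t → MooreN k t) → MooreP k s

/-- Next-player win in Moore's Nim: some move leads to a previous-player win. -/
inductive MooreN (k : ℕ) : Multiset ℕ → Prop
  | mk (s t : Multiset ℕ) : MooreMove k s t → MooreP k t → MooreN k s
end

open Multiset

namespace Multiset

variable {α β : Type*}

theorem exists_le_card_eq {s : Multiset α} {n : ℕ} (h : n ≤ card s) : ∃ t ≤ s, card t = n := by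
  obtain ⟨t, ht⟩ := card_pos_iff_exists_mem.mp
    (by rw [card_powersetCard]; exact Nat.choose_pos h : 0 < card (powersetCard n s))
  exact ⟨t, mem_powersetCard.mp ht⟩

theorem countP_le_countP_of_imp {p q : α → Prop} [DecidablePred p] [DecidablePred q]
    {s : Multiset α} (h : ∀ x ∈ s, p x → q x) : countP p s ≤ countP q s := by
  induction s using Quotient.inductionOn
  simpa using List.countP_mono_left (by simpa using h)

theorem countP_lt_countP_of_imp {p q : α → Prop} [DecidablePred p] [DecidablePred q]
    {s : Multiset α} (h : ∀ x ∈ s, p x → q x) {a : α} (ha : a ∈ s) (hpa : ¬ p a) (hqa : q a) :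
    countP p s < countP q s := by
  obtain ⟨s, rfl⟩ := exists_cons_of_mem ha
  rw [countP_cons_of_neg _ hpa, countP_cons_of_pos _ hqa]
  exact Nat.lt_succ_of_le (countP_le_countP_of_imp fun x hx => h x (mem_cons_of_mem hx))

theorem exists_map_fst_map_snd_of_rel {R : α → β → Prop} {s : Multiset α} {t : Multiset β}
    (h : Rel R s t) :
    ∃ p : Multiset (α × β), (∀ x ∈ p, R x.1 x.2) ∧ p.map Prod.fst = s ∧ p.map Prod.snd = t := by
  induction h with
  | zero => exact ⟨0, by simp⟩
  | @cons a b _ _ hab _ ih =>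
    obtain ⟨p, hp, rfl, rfl⟩ := ih
    refine ⟨(a, b) ::ₘ p, ?_, by simp, by simp⟩
    simpa [hab] using hp

end Multiset

namespace Nat

theorem div_two_pow_succ (a j : ℕ) : a / 2 ^ (j + 1) = a / 2 ^ j / 2 := by
  rw [pow_succ, Nat.div_div_eq_div_mul]

theorem testBit_eq_of_div_two_pow_eq {a b m i : ℕ} (h : a / 2 ^ m = b / 2 ^ m) (hi : m ≤ i) :
    a.testBit i = b.testBit i := by
  obtain ⟨d, rfl⟩ := Nat.exists_eq_add_of_le hi
  rw [add_comm m d, ← testBit_div_two_pow, ← testBit_div_two_pow, h]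

theorem testBit_of_div_two_pow_succ_eq {a b i : ℕ} (hba : b ≤ a)
    (h : b / 2 ^ (i + 1) = a / 2 ^ (i + 1)) :
    (b.testBit i → a.testBit i) ∧ (b / 2 ^ i ≠ a / 2 ^ i → a.testBit i ∧ ¬ b.testBit i) := by
  have := Nat.div_le_div_right hba (c := 2 ^ i)
  rw [div_two_pow_succ, div_two_pow_succ] at h
  simp only [testBit_eq_decide_div_mod_eq, decide_eq_true_eq]
  omega

def replaceLowBits (j : ℕ) (e : Bool) (b : ℕ) : ℕ := 2 ^ j * (2 * (b / 2 ^ (j + 1)) + e.toNat)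

theorem replaceLowBits_div_two_pow (j : ℕ) (e : Bool) (b : ℕ) :
    replaceLowBits j e b / 2 ^ j = 2 * (b / 2 ^ (j + 1)) + e.toNat :=
  Nat.mul_div_cancel_left _ (Nat.two_pow_pos j)

theorem testBit_replaceLowBits_self (j : ℕ) (e : Bool) (b : ℕ) :
    (replaceLowBits j e b).testBit j = e := by
  rw [testBit_eq_decide_div_mod_eq, replaceLowBits_div_two_pow]
  cases e <;> simp

theorem testBit_replaceLowBits_of_lt {j i : ℕ} (e : Bool) (b : ℕ) (hi : j < i) :
    (replaceLowBits j e b).testBit i = b.testBit i := by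
  refine testBit_eq_of_div_two_pow_eq (m := j + 1) ?_ hi
  rw [div_two_pow_succ, replaceLowBits_div_two_pow]
  have := Bool.toNat_le e
  omega

theorem replaceLowBits_div_lt_of_div_lt {j a b : ℕ} (e : Bool)
    (h : b / 2 ^ (j + 1) < a / 2 ^ (j + 1)) : replaceLowBits j e b / 2 ^ j < a / 2 ^ j := by
  rw [replaceLowBits_div_two_pow]
  rw [div_two_pow_succ a] at h
  have := Bool.toNat_le e
  omega

theorem replaceLowBits_false_div_lt {j a : ℕ} (h : a.testBit j) :
    replaceLowBits j false a / 2 ^ j < a / 2 ^ j := by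
  rw [testBit_eq_decide_div_mod_eq, decide_eq_true_eq] at h
  rw [replaceLowBits_div_two_pow, div_two_pow_succ, Bool.toNat_false]
  omega

end Nat

def bitCount (i : ℕ) (s : Multiset ℕ) : ℕ := s.countP (fun a => a.testBit i)

theorem bitCount_eq_card_filter (i : ℕ) (s : Multiset ℕ) :
    bitCount i s = card (s.filter (fun a => a.testBit i)) :=
  countP_eq_card_filter _ _

theorem bitCount_add (i : ℕ) (s t : Multiset ℕ) :
    bitCount i (s + t) = bitCount i s + bitCount i t :=
  countP_add _ _ _

theorem bitCount_sub (i : ℕ) {s t : Multiset ℕ} (h : t ≤ s) :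
    bitCount i (s - t) = bitCount i s - bitCount i t :=
  countP_sub h _

theorem bitCount_map {α : Type*} (i : ℕ) (f : α → ℕ) (s : Multiset α) :
    bitCount i (s.map f) = s.countP (fun x => (f x).testBit i) := by
  rw [bitCount, countP_map, countP_eq_card_filter]

theorem bitCount_map_congr {α : Type*} {i : ℕ} {f g : α → ℕ} {s : Multiset α}
    (h : ∀ x ∈ s, (f x).testBit i = (g x).testBit i) :
    bitCount i (s.map f) = bitCount i (s.map g) := by
  rw [bitCount_map, bitCount_map]
  exact countP_congr rfl fun x hx => by rw [h x hx]

theorem bitCount_map_replaceLowBits_self {α : Type*} (j : ℕ) (e : Bool) (g : α → ℕ)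
    (s : Multiset α) :
    bitCount j (s.map fun x => Nat.replaceLowBits j e (g x)) = e.toNat * card s := by
  simp only [bitCount_map, Nat.testBit_replaceLowBits_self]
  cases e <;> simp

theorem exists_bitCount_map_snd_lt {p : Multiset (ℕ × ℕ)} (hp : p ≠ 0) (hlt : ∀ x ∈ p, x.2 < x.1) :
    ∃ i, bitCount i (p.map Prod.snd) < bitCount i (p.map Prod.fst) := by
  classical
  have hex : ∃ m, ∀ x ∈ p, x.2 / 2 ^ m = x.1 / 2 ^ m := by
    refine ⟨(p.map Prod.fst).sum, fun x hx => ?_⟩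
    have hx₁ : x.1 < 2 ^ (p.map Prod.fst).sum :=
      (le_sum_of_mem (mem_map_of_mem _ hx)).trans_lt Nat.lt_two_pow_self
    rw [Nat.div_eq_of_lt hx₁, Nat.div_eq_of_lt ((hlt x hx).trans hx₁)]
  -- `i` is the highest bit at which some pair differs
  obtain ⟨i, hi⟩ : ∃ i, Nat.find hex = i + 1 := by
    refine Nat.exists_eq_succ_of_ne_zero fun h0 => ?_
    obtain ⟨x, hx⟩ := exists_mem_of_ne_zero hp
    have := Nat.find_spec hex x hx
    rw [h0, pow_zero, Nat.div_one, Nat.div_one] at this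
    exact (hlt x hx).ne this
  have hagree := hi ▸ Nat.find_spec hex
  obtain ⟨x, hx, hne⟩ : ∃ x ∈ p, x.2 / 2 ^ i ≠ x.1 / 2 ^ i := by
    simpa using Nat.find_min hex (hi ▸ Nat.lt_succ_self i)
  have hbits := fun y hy => Nat.testBit_of_div_two_pow_succ_eq (hlt y hy).le (hagree y hy)
  refine ⟨i, ?_⟩
  rw [bitCount_map, bitCount_map]
  exact countP_lt_countP_of_imp (fun y hy => (hbits y hy).1) hx ((hbits x hx).2 hne).2
    ((hbits x hx).2 hne).1

variable {k : ℕ}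

def IsBalanced (k : ℕ) (s : Multiset ℕ) : Prop := ∀ i, k ∣ bitCount i s

theorem not_isBalanced_of_mooreMove {s t : Multiset ℕ} (hs : IsBalanced k s)
    (hmove : MooreMove k s t) : ¬ IsBalanced k t := by
  obtain ⟨r, r', hrs, hr0, hcard, hrel, rfl⟩ := hmove
  obtain ⟨p, hp, rfl, rfl⟩ := exists_map_fst_map_snd_of_rel hrel
  obtain ⟨i, hi⟩ := exists_bitCount_map_snd_lt (by simpa using hr0) hp
  intro ht
  have hrs_i : bitCount i (p.map Prod.fst) ≤ bitCount i s := countP_le_of_le _ hrs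
  have hr_i : bitCount i (p.map Prod.fst) ≤ card p :=
    (countP_le_card _ _).trans_eq (card_map _ _)
  have hsum : bitCount i (s - p.map Prod.fst + p.map Prod.snd) +
      (bitCount i (p.map Prod.fst) - bitCount i (p.map Prod.snd)) = bitCount i s := by
    rw [bitCount_add, bitCount_sub i hrs]
    omega
  have hdvd := (Nat.dvd_add_right (ht i)).mp (hsum ▸ hs i)
  have := Nat.le_of_dvd (by omega) hdvd
  have : 0 < card p := card_pos.mpr (by simpa using hr0)
  simp only [card_map] at hcard
  omega

theorem sum_lt_of_mooreMove {s t : Multiset ℕ} (hmove : MooreMove k s t) : t.sum < s.sum := by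
  obtain ⟨r, r', hrs, hr0, -, hrel, rfl⟩ := hmove
  obtain ⟨p, hp, rfl, rfl⟩ := exists_map_fst_map_snd_of_rel hrel
  have hlt := sum_lt_sum_of_nonempty (by simpa using hr0) hp
  have hs := congrArg sum (tsub_add_cancel_of_le hrs)
  rw [sum_add] at hs ⊢
  omega

theorem mooreP_iff_of_kernel (S : Multiset ℕ → Prop)
    (hstable : ∀ s t, S s → MooreMove k s t → ¬ S t)
    (habsorb : ∀ s, ¬ S s → ∃ t, MooreMove k s t ∧ S t) (s : Multiset ℕ) :
    MooreP k s ↔ S s := by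
  induction s using (measure Multiset.sum).wf.induction with
  | _ s ih =>
    constructor
    · rintro ⟨_, hP⟩
      by_contra hs
      obtain ⟨t, hst, ht⟩ := habsorb s hs
      obtain ⟨_, u, htu, hu⟩ := hP t hst
      have hut : u.sum < s.sum := (sum_lt_of_mooreMove htu).trans (sum_lt_of_mooreMove hst)
      exact hstable t u ht htu ((ih u hut).mp hu)
    · refine fun hs => MooreP.mk s fun t hst => ?_
      obtain ⟨u, htu, hu⟩ := habsorb t (hstable s t hs hst)
      have hus : u.sum < s.sum := (sum_lt_of_mooreMove htu).trans (sum_lt_of_mooreMove hst)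
      exact MooreN.mk t u htu ((ih u hus).mpr hu)

theorem exists_dvd_sub_add (hk : 0 < k) {f : ℕ} (hf : f ≤ k - 1) (y : ℕ) :
    ∃ x c, x ≤ f ∧ c ≤ y ∧ f + c ≤ k - 1 ∧ k ∣ y - c + x := by
  have hdiv := Nat.div_add_mod y k
  have hmod := Nat.mod_lt y hk
  by_cases h : f + y % k ≤ k - 1
  · exact ⟨0, y % k, Nat.zero_le f, Nat.mod_le y k, h, ⟨y / k, by omega⟩⟩
  · exact ⟨k - y % k, 0, by omega, Nat.zero_le y, by omega, ⟨y / k + 1, by rw [mul_add]; omega⟩⟩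

/-- A partial move from `s`: the piles `u` stay untouched and each `x ∈ p` replaces a pile `x.1`
by `x.2`. Every replaced pile has already dropped at a bit `≥ j`, so its bits below `j` are still
free to choose. -/
structure IsBalancingAbove (k j : ℕ) (s u : Multiset ℕ) (p : Multiset (ℕ × ℕ)) : Prop where
  eq_add : s = u + p.map Prod.fst
  card_le : card p ≤ k - 1
  div_lt : ∀ x ∈ p, x.2 / 2 ^ j < x.1 / 2 ^ j
  dvd_bitCount : ∀ i, j ≤ i → k ∣ bitCount i (u + p.map Prod.snd)

theorem isBalancingAbove_sum (s : Multiset ℕ) : IsBalancingAbove k s.sum s s 0 where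
  eq_add := by simp
  card_le := by simp
  div_lt := by simp
  dvd_bitCount i hi := by
    suffices bitCount i s = 0 by simp [this]
    refine countP_eq_zero.mpr fun a ha => ?_
    have : a < 2 ^ i := (le_sum_of_mem ha).trans_lt
      (Nat.lt_two_pow_self.trans_le (Nat.pow_le_pow_right two_pos hi))
    simp [Nat.testBit_lt_two_pow this]

theorem IsBalancingAbove.exists_succ {j : ℕ} {s u : Multiset ℕ} {p : Multiset (ℕ × ℕ)} (hk : 0 < k)
    (h : IsBalancingAbove k (j + 1) s u p) : ∃ u' p', IsBalancingAbove k j s u' p' := by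
  obtain ⟨x, c, hx, hc, hcard, hdvd⟩ := exists_dvd_sub_add hk h.card_le (bitCount j u)
  obtain ⟨p₁, hp₁, rfl⟩ := exists_le_card_eq hx
  obtain ⟨p₂, rfl⟩ := Multiset.le_iff_exists_add.mp hp₁
  obtain ⟨q, hq, rfl⟩ := exists_le_card_eq (hc.trans_eq (bitCount_eq_card_filter j u))
  have hqbit : ∀ a ∈ q, a.testBit j := fun a ha => (mem_filter.mp (mem_of_le hq ha)).2
  obtain ⟨u', rfl⟩ := Multiset.le_iff_exists_add.mp (hq.trans (filter_le _ _))
  refine ⟨u', p₁.map (fun x => (x.1, Nat.replaceLowBits j true x.2)) +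
    p₂.map (fun x => (x.1, Nat.replaceLowBits j false x.2)) +
    q.map (fun a => (a, Nat.replaceLowBits j false a)), ?_, ?_, ?_, ?_⟩
  · rw [h.eq_add]
    simp only [Multiset.map_add, map_map, Function.comp_def, map_id']
    abel
  · simp only [Multiset.card_add, card_map] at hcard ⊢
    exact hcard
  · simp only [mem_add, mem_map]
    rintro _ ((⟨y, hy, rfl⟩ | ⟨y, hy, rfl⟩) | ⟨a, ha, rfl⟩)
    · exact Nat.replaceLowBits_div_lt_of_div_lt _ (h.div_lt y (mem_add.mpr (.inl hy)))
    · exact Nat.replaceLowBits_div_lt_of_div_lt _ (h.div_lt y (mem_add.mpr (.inr hy)))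
    · exact Nat.replaceLowBits_false_div_lt (hqbit a ha)
  · intro i hi
    simp only [Multiset.map_add, map_map, Function.comp_def, bitCount_add]
    rcases hi.eq_or_lt with rfl | hji
    · have hq' : bitCount j q = card q := countP_eq_card.mpr hqbit
      rw [bitCount_add, hq'] at hdvd
      rw [bitCount_map_replaceLowBits_self, bitCount_map_replaceLowBits_self,
        bitCount_map_replaceLowBits_self j false (fun a => a), Bool.toNat_true, Bool.toNat_false]
      convert hdvd using 1
      omega
    · have e₁ : bitCount i (p₁.map fun x => Nat.replaceLowBits j true x.2) =
          bitCount i (p₁.map Prod.snd) :=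
        bitCount_map_congr fun x _ => Nat.testBit_replaceLowBits_of_lt _ _ hji
      have e₂ : bitCount i (p₂.map fun x => Nat.replaceLowBits j false x.2) =
          bitCount i (p₂.map Prod.snd) :=
        bitCount_map_congr fun x _ => Nat.testBit_replaceLowBits_of_lt _ _ hji
      have e₃ : bitCount i (q.map fun a => Nat.replaceLowBits j false a) = bitCount i q := by
        simpa using bitCount_map_congr (g := id) fun a _ => Nat.testBit_replaceLowBits_of_lt _ a hji
      have := h.dvd_bitCount i hji
      simp only [Multiset.map_add, bitCount_add] at this
      rw [e₁, e₂, e₃]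
      convert this using 1
      ring

theorem exists_isBalancingAbove (hk : 0 < k) (s : Multiset ℕ) {j : ℕ} (hj : j ≤ s.sum) :
    ∃ u p, IsBalancingAbove k j s u p := by
  refine Nat.decreasingInduction (motive := fun j _ => ∃ u p, IsBalancingAbove k j s u p)
    (fun j _ ⟨u, p, h⟩ => h.exists_succ hk) ⟨s, 0, isBalancingAbove_sum s⟩ hj

theorem exists_mooreMove_isBalanced (hk : 0 < k) {s : Multiset ℕ} (hs : ¬ IsBalanced k s) :
    ∃ t, MooreMove k s t ∧ IsBalanced k t := by
  obtain ⟨u, p, rfl, hcard, hlt, hdvd⟩ := exists_isBalancingAbove hk s (Nat.zero_le _)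
  have hbal : IsBalanced k (u + p.map Prod.snd) := fun i => hdvd i (Nat.zero_le i)
  refine ⟨u + p.map Prod.snd, ⟨p.map Prod.fst, p.map Prod.snd, le_add_left le_rfl, ?_, ?_, ?_, ?_⟩,
    hbal⟩
  · intro hp
    obtain rfl : p = 0 := by simpa using hp
    exact hs (by simpa using hbal)
  · rwa [card_map]
  · exact rel_map.mpr (rel_refl_of_refl_on fun x hx => by simpa using hlt x hx)
  · rw [add_tsub_cancel_right]

/-- Moore's theorem: for `k ≥ 2`, a position of Moore's Nim_k is a P-position
iff for every bit position `i`, the number of piles whose `i`-th binary digit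
is `1` is divisible by `k`. -/
theorem stmt7 (k : ℕ) (hk : 2 ≤ k) (s : Multiset ℕ) :
    MooreP k s ↔
      ∀ i : ℕ, Multiset.card (s.filter (fun a => Nat.testBit a i)) % k = 0 := by
  rw [mooreP_iff_of_kernel (IsBalanced k) (fun _ _ => not_isBalanced_of_mooreMove)
    (fun _ => exists_mooreMove_isBalanced (by omega)) s]
  simp only [IsBalanced, bitCount_eq_card_filter, Nat.dvd_iff_mod_eq_zero]
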